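/- Let k,l ≥ 2 and let (w_i)_{i≥1} be a strictly increasing sequence of non-negative real numbers satisfying w_{i-1} + w_{i+1} = (o_i + 2)·w_i with o_{2i-1} = l − 2, o_{2i} = k − 2 (setting w_0 appropriately). For (k,l)-admissible words (c_i) and (d_i), one has (c_i) ≺ (d_i) in the order where (c_i) ≺ (d_i) iff there exists n with c_n < d_n and c_i = d_i for all i > n, if and only if ∑ c_i·w_i < ∑ d_i·w_i. In particular the map (c_i) ↦ ∑ c_i·w_i is injective on (k,l)-admissible words. -/

import Mathlib

/-- The alternating coefficient sequence: `l - 2` at odd indices, `k - 2` at even ones. -/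
def klCoeff (k l : ℕ) (i : ℕ) : ℕ := if i % 2 = 1 then l - 2 else k - 2

/-- A forbidden pattern in a word. -/
def Forbidden (k l : ℕ) (c : ℕ → ℕ) : Prop :=
  ∃ i j : ℕ, 1 ≤ i ∧ i < j ∧
    ∀ h : ℕ, i ≤ h → h ≤ j → c h = klCoeff k l h + (if h = i ∨ h = j then 1 else 0)

/-- The set of (k,l)-admissible words (indexed from 1; position 0 is unused). -/
def Admissible (k l : ℕ) : Set (ℕ → ℕ) :=
  {c | c 0 = 0 ∧ (∃ N : ℕ, ∀ i : ℕ, N ≤ i → c i = 0) ∧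
       (∀ i : ℕ, 1 ≤ i → c i ≤ klCoeff k l i + 1) ∧ ¬Forbidden k l c}

/-- The order `≺`: words compared at the highest index of disagreement. -/
def Prec (c d : ℕ → ℕ) : Prop := ∃ n : ℕ, c n < d n ∧ ∀ i : ℕ, n < i → c i = d i

/-! Write `o n = klCoeff k l n` and `S n = ∑_{i<n} c i * w i`. Since
`w (n+1) - w n = (o n + 1) * w n - w (n-1) ≥ o n * w n`, reading an admissible word upwards keeps
`S n < w n - w (n-1)`, except after a letter `o t + 1` followed by letters `o h`, where only
`S n < w n` survives; a further letter `o n + 1` there would complete a forbidden pattern.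
Hence `S n < w n` for all `n ≥ 1`, so the highest disagreement of two words decides which
weight is larger. -/

open Finset

/-- The beginning of a forbidden pattern that is still open at `n`. -/
def OpenPattern (k l : ℕ) (c : ℕ → ℕ) (n : ℕ) : Prop :=
  ∃ t, 1 ≤ t ∧ t < n ∧ c t = klCoeff k l t + 1 ∧ ∀ h, t < h → h < n → c h = klCoeff k l h

section OpenPattern

variable {k l : ℕ} {c : ℕ → ℕ} {n : ℕ}

lemma OpenPattern.forbidden (hp : OpenPattern k l c n) (hn : c n = klCoeff k l n + 1) :
    Forbidden k l c := by
  obtain ⟨t, ht1, htn, ht, hrun⟩ := hp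
  refine ⟨t, n, ht1, htn, fun h hth hhn => ?_⟩
  rcases hth.eq_or_lt with rfl | hth
  · simp [ht]
  rcases hhn.eq_or_lt with rfl | hhn
  · simp [hn]
  simp [hrun h hth hhn, hth.ne', hhn.ne]

lemma OpenPattern.succ (hp : OpenPattern k l c n) (hn : c n = klCoeff k l n) :
    OpenPattern k l c (n + 1) := by
  obtain ⟨t, ht1, htn, ht, hrun⟩ := hp
  refine ⟨t, ht1, by omega, ht, fun h hth hhn => ?_⟩
  rcases (Nat.lt_succ_iff.mp hhn).eq_or_lt with rfl | hhn
  · exact hn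
  · exact hrun h hth hhn

lemma openPattern_succ_of_eq_add_one (hn1 : 1 ≤ n) (hn : c n = klCoeff k l n + 1) :
    OpenPattern k l c (n + 1) :=
  ⟨n, hn1, n.lt_succ_self, hn, fun _ hh hh' => by omega⟩

end OpenPattern

lemma sum_range_lt_or_openPattern {k l : ℕ} {w : ℕ → ℝ} (hw0 : ∀ i, 0 ≤ w i)
    (hmono : StrictMono w)
    (hrec : ∀ i : ℕ, 1 ≤ i → w (i - 1) + w (i + 1) = ((klCoeff k l i : ℝ) + 2) * w i)
    {c : ℕ → ℕ} (hc : c ∈ Admissible k l) {n : ℕ} (hn : 1 ≤ n) :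
    ∑ i ∈ range n, (c i : ℝ) * w i < w n - w (n - 1) ∨
      OpenPattern k l c n ∧ ∑ i ∈ range n, (c i : ℝ) * w i < w n := by
  obtain ⟨hc0, -, hbound, hforb⟩ := hc
  induction n, hn using Nat.le_induction with
  | base => exact Or.inl (by simpa [hc0] using hmono zero_lt_one)
  | succ n hn ih =>
    set o := klCoeff k l n
    have hrec_n := hrec n hn
    have hmono_n : w (n - 1) ≤ w n := hmono.monotone (n.sub_le 1)
    have hS_lt : ∑ i ∈ range n, (c i : ℝ) * w i < w n := by
      rcases ih with ih | ⟨-, ih⟩ <;> linarith [hw0 (n - 1)]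
    rw [sum_range_succ, Nat.add_sub_cancel]
    obtain hlt | heq | heq : c n < o ∨ c n = o ∨ c n = o + 1 := by
      have := hbound n hn; omega
    · have : ((c n : ℝ) + 1) * w n ≤ o * w n :=
        mul_le_mul_of_nonneg_right (by exact_mod_cast hlt) (hw0 n)
      left; linarith
    · rw [heq]
      rcases ih with ih | ⟨hp, -⟩
      · left; linarith
      · right; exact ⟨hp.succ heq, by linarith⟩
    · rw [heq]
      rcases ih with ih | ⟨hp, -⟩
      · right; exact ⟨openPattern_succ_of_eq_add_one hn heq, by push_cast; linarith⟩
      · exact absurd (hp.forbidden heq) hforb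

lemma sum_range_lt_of_admissible {k l : ℕ} {w : ℕ → ℝ} (hw0 : ∀ i, 0 ≤ w i)
    (hmono : StrictMono w)
    (hrec : ∀ i : ℕ, 1 ≤ i → w (i - 1) + w (i + 1) = ((klCoeff k l i : ℝ) + 2) * w i)
    {c : ℕ → ℕ} (hc : c ∈ Admissible k l) {n : ℕ} (hn : 1 ≤ n) :
    ∑ i ∈ range n, (c i : ℝ) * w i < w n := by
  rcases sum_range_lt_or_openPattern hw0 hmono hrec hc hn with h | ⟨-, h⟩
  · linarith [hw0 (n - 1)]
  · exact h

lemma finsum_mul_eq_sum_range (w : ℕ → ℝ) {c : ℕ → ℕ} {M : ℕ} (hc : ∀ i, M ≤ i → c i = 0) :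
    ∑ᶠ i, (c i : ℝ) * w i = ∑ i ∈ range M, (c i : ℝ) * w i := by
  refine finsum_eq_sum_of_support_subset _ fun i hi => ?_
  by_contra hiM
  simp_all [hc i (by simpa using hiM)]

lemma exists_common_zero_tail {k l : ℕ} {c d : ℕ → ℕ} (hc : c ∈ Admissible k l)
    (hd : d ∈ Admissible k l) : ∃ M, ∀ i, M ≤ i → c i = 0 ∧ d i = 0 := by
  obtain ⟨Nc, hNc⟩ := hc.2.1
  obtain ⟨Nd, hNd⟩ := hd.2.1
  exact ⟨max Nc Nd, fun i hi => ⟨hNc i (le_of_max_le_left hi), hNd i (le_of_max_le_right hi)⟩⟩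

lemma prec_trichotomy {c d : ℕ → ℕ} (h : ∃ N, ∀ i, N ≤ i → c i = d i) :
    c = d ∨ Prec c d ∨ Prec d c := by
  classical
  cases hN : Nat.find h with
  | zero => exact Or.inl (funext fun i => Nat.find_spec h i (by omega))
  | succ n =>
    have hagree : ∀ i, n < i → c i = d i := fun i hi => Nat.find_spec h i (by omega)
    have hne : c n ≠ d n := by
      intro heq
      refine Nat.find_min h (m := n) (by omega) fun i hi => ?_
      rcases hi.eq_or_lt with rfl | hi
      exacts [heq, hagree i hi]
    rcases hne.lt_or_gt with hlt | hgt
    · exact Or.inr (Or.inl ⟨n, hlt, hagree⟩)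
    · exact Or.inr (Or.inr ⟨n, hgt, fun i hi => (hagree i hi).symm⟩)

lemma finsum_mul_lt_of_prec {k l : ℕ} {w : ℕ → ℝ} (hw0 : ∀ i, 0 ≤ w i) (hmono : StrictMono w)
    (hrec : ∀ i : ℕ, 1 ≤ i → w (i - 1) + w (i + 1) = ((klCoeff k l i : ℝ) + 2) * w i)
    {c d : ℕ → ℕ} (hc : c ∈ Admissible k l) (hd : d ∈ Admissible k l) (hcd : Prec c d) :
    ∑ᶠ i, (c i : ℝ) * w i < ∑ᶠ i, (d i : ℝ) * w i := by
  obtain ⟨n, hn, hagree⟩ := hcd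
  have hn1 : 1 ≤ n := Nat.one_le_iff_ne_zero.mpr fun h0 => by simp [h0, hc.1, hd.1] at hn
  obtain ⟨N, hN⟩ := exists_common_zero_tail hc hd
  set M := max N (n + 1)
  have hnM : n + 1 ≤ M := le_max_right _ _
  rw [finsum_mul_eq_sum_range w fun i hi => (hN i (le_of_max_le_left hi)).1,
    finsum_mul_eq_sum_range w fun i hi => (hN i (le_of_max_le_left hi)).2,
    ← sum_range_add_sum_Ico _ hnM, ← sum_range_add_sum_Ico _ hnM]
  have htail : ∑ i ∈ Ico (n + 1) M, (c i : ℝ) * w i = ∑ i ∈ Ico (n + 1) M, (d i : ℝ) * w i :=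
    sum_congr rfl fun i hi => by rw [hagree i (by simp at hi; omega)]
  rw [htail, add_lt_add_iff_right]
  have hc_lt := sum_range_lt_of_admissible hw0 hmono hrec hc hn1
  have hd_nonneg : 0 ≤ ∑ i ∈ range n, (d i : ℝ) * w i :=
    sum_nonneg fun i _ => mul_nonneg (Nat.cast_nonneg _) (hw0 i)
  have hcn : ((c n : ℝ) + 1) * w n ≤ d n * w n :=
    mul_le_mul_of_nonneg_right (by exact_mod_cast hn) (hw0 n)
  rw [sum_range_succ, sum_range_succ]
  linarith

theorem prec_iff_weighted_sum_lt_general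
    (k l : ℕ)
    (w : ℕ → ℝ) (hw0 : ∀ i : ℕ, 0 ≤ w i) (hmono : StrictMono w)
    (hrec : ∀ i : ℕ, 1 ≤ i → w (i - 1) + w (i + 1) = ((klCoeff k l i : ℝ) + 2) * w i) :
    (∀ c ∈ Admissible k l, ∀ d ∈ Admissible k l,
      (Prec c d ↔ ∑ᶠ i : ℕ, (c i : ℝ) * w i < ∑ᶠ i : ℕ, (d i : ℝ) * w i)) ∧
    Set.InjOn (fun c : ℕ → ℕ => ∑ᶠ i : ℕ, (c i : ℝ) * w i) (Admissible k l) := by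
  have hlt : ∀ {c d}, c ∈ Admissible k l → d ∈ Admissible k l → Prec c d →
      ∑ᶠ i, (c i : ℝ) * w i < ∑ᶠ i, (d i : ℝ) * w i :=
    finsum_mul_lt_of_prec hw0 hmono hrec
  have htri : ∀ c ∈ Admissible k l, ∀ d ∈ Admissible k l, c = d ∨ Prec c d ∨ Prec d c :=
    fun c hc d hd => prec_trichotomy <| (exists_common_zero_tail hc hd).imp fun _ h i hi => by
      rw [(h i hi).1, (h i hi).2]
  refine ⟨fun c hc d hd => ⟨hlt hc hd, fun hsum => ?_⟩, fun c hc d hd hsum => ?_⟩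
  · rcases htri c hc d hd with rfl | hcd | hdc
    · exact absurd hsum (lt_irrefl _)
    · exact hcd
    · exact absurd (hlt hd hc hdc) hsum.not_gt
  · rcases htri c hc d hd with rfl | hcd | hdc
    · rfl
    · exact absurd hsum (hlt hc hd hcd).ne
    · exact absurd hsum.symm (hlt hd hc hdc).ne

/-- for increasing weights, the order ≺ matches comparison of
weighted sums, and the weighted-sum map is injective on admissible words. -/
theorem prec_iff_weighted_sum_lt
    (k l : ℕ) (hk : 2 ≤ k) (hl : 2 ≤ l)
    (w : ℕ → ℝ) (hw0 : ∀ i : ℕ, 0 ≤ w i) (hmono : StrictMono w)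
    (hrec : ∀ i : ℕ, 1 ≤ i → w (i - 1) + w (i + 1) = ((klCoeff k l i : ℝ) + 2) * w i) :
    (∀ c ∈ Admissible k l, ∀ d ∈ Admissible k l,
      (Prec c d ↔ ∑ᶠ i : ℕ, (c i : ℝ) * w i < ∑ᶠ i : ℕ, (d i : ℝ) * w i)) ∧
    Set.InjOn (fun c : ℕ → ℕ => ∑ᶠ i : ℕ, (c i : ℝ) * w i) (Admissible k l) :=
  prec_iff_weighted_sum_lt_general k l w hw0 hmono hrec
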